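/- arXiv:2002.10551 — 5 statements merged into one kernel-verified Lean document; each statement's English description precedes it below -/
import Mathlib

section
/- Suppose {x_{-n}}_{n∈ℕ} ⊆ X satisfies A_0 x_{-n} + A_1 x_{-n-1} = 0 for all n ≥ 1, and the Laurent coefficient identities hold (R_{-1}A_1 + R_0A_0 = I and R_{-1}A_0R_0 = 0). Then for all n ≥ 1, R_{-1}A_1 x_{-n} = (-1)^{n-1}(R_{-1}A_0)^{n-1} R_{-1}A_1 x_{-1}. -/
theorem statement6
    {X Y : Type*} [NormedAddCommGroup X] [NormedSpace ℂ X] [CompleteSpace X]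
    [NormedAddCommGroup Y] [NormedSpace ℂ Y] [CompleteSpace Y]
    (A0 A1 : X →L[ℂ] Y) (Rm1 R0 : Y →L[ℂ] X)
    (h1 : Rm1 ∘L A1 + R0 ∘L A0 = ContinuousLinearMap.id ℂ X)
    (h3 : (Rm1 ∘L A0) ∘L R0 = 0)
    (x : ℕ → X)
    (hx : ∀ n : ℕ, 1 ≤ n → A0 (x n) + A1 (x (n + 1)) = 0) :
    ∀ n : ℕ, 1 ≤ n →
      Rm1 (A1 (x n)) =
        (-1 : ℂ) ^ (n - 1) • ((Rm1 ∘L A0) ^ (n - 1)) (Rm1 (A1 (x 1))) := by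
  have key : ∀ n : ℕ, 1 ≤ n →
      Rm1 (A1 (x (n + 1))) = -(Rm1 (A0 (Rm1 (A1 (x n))))) := by
    intro n hn
    have hA : A1 (x (n + 1)) = -(A0 (x n)) :=
      eq_neg_of_add_eq_zero_right (hx n hn)
    have hid : Rm1 (A1 (x n)) + R0 (A0 (x n)) = x n := by
      have := congrArg (fun T => T (x n)) h1; simpa using this
    have hz : Rm1 (A0 (R0 (A0 (x n)))) = 0 := by
      have := congrArg (fun T => T (A0 (x n))) h3; simpa using this
    calc Rm1 (A1 (x (n + 1))) = -(Rm1 (A0 (x n))) := by rw [hA]; simp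
      _ = -(Rm1 (A0 (Rm1 (A1 (x n)) + R0 (A0 (x n))))) := by rw [hid]
      _ = -(Rm1 (A0 (Rm1 (A1 (x n))))) := by simp [map_add, hz]
  intro n hn
  induction n, hn using Nat.le_induction with
  | base => simp
  | succ n hn ih =>
    obtain ⟨m, rfl⟩ : ∃ m, n = m + 1 := ⟨n - 1, (Nat.succ_pred_eq_of_pos hn).symm⟩
    rw [key (m + 1) hn, ih]
    simp [pow_succ', ContinuousLinearMap.mul_apply, map_smul, neg_smul]
end

section
/- Suppose {x_{-n}} ⊆ X satisfies A_0 x_{-n} + A_1 x_{-n-1} = 0 for all n ≥ 1, and R_{-1}A_1 + R_0A_0 = I, R_0A_1R_{-1} = 0. Then for every n ≥ 1 and every 1 ≤ k ≤ n, R_0A_0 x_{-n+k-1} = (-1)^{k-1}(R_0A_1)^{k-1} R_0A_0 x_{-n}. -/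
theorem statement7
    {X Y : Type*} [NormedAddCommGroup X] [NormedSpace ℂ X] [CompleteSpace X]
    [NormedAddCommGroup Y] [NormedSpace ℂ Y] [CompleteSpace Y]
    (A0 A1 : X →L[ℂ] Y) (Rm1 R0 : Y →L[ℂ] X)
    (h1 : Rm1 ∘L A1 + R0 ∘L A0 = ContinuousLinearMap.id ℂ X)
    (h4 : (R0 ∘L A1) ∘L Rm1 = 0)
    (x : ℕ → X)
    (hx : ∀ n : ℕ, 1 ≤ n → A0 (x n) + A1 (x (n + 1)) = 0) :
    ∀ n : ℕ, 1 ≤ n → ∀ k : ℕ, 1 ≤ k → k ≤ n →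
      R0 (A0 (x (n - k + 1))) =
        (-1 : ℂ) ^ (k - 1) • ((R0 ∘L A1) ^ (k - 1)) (R0 (A0 (x n))) := by
  have key : ∀ m : ℕ, 1 ≤ m →
      R0 (A0 (x m)) = -((R0 ∘L A1) (R0 (A0 (x (m + 1))))) := by
    intro m hm
    have h2 : A0 (x m) = -(A1 (x (m + 1))) :=
      eq_neg_of_add_eq_zero_left (hx m hm)
    have hid : Rm1 (A1 (x (m + 1))) + R0 (A0 (x (m + 1))) = x (m + 1) := by
      have := congrArg (fun f : X →L[ℂ] X => f (x (m + 1))) h1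
      simpa using this
    have h0 : (R0 ∘L A1) (Rm1 (A1 (x (m + 1)))) = 0 := by
      have := congrArg (fun f : Y →L[ℂ] X => f (A1 (x (m + 1)))) h4
      simpa using this
    calc R0 (A0 (x m)) = -(R0 (A1 (x (m + 1)))) := by rw [h2]; simp
      _ = -((R0 ∘L A1) (x (m + 1))) := rfl
      _ = -((R0 ∘L A1) (Rm1 (A1 (x (m + 1))) + R0 (A0 (x (m + 1))))) := by rw [hid]
      _ = -((R0 ∘L A1) (R0 (A0 (x (m + 1))))) := by
          rw [map_add, h0, zero_add]
  have main : ∀ j : ℕ, ∀ n : ℕ, j + 1 ≤ n →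
      R0 (A0 (x (n - j))) = (-1 : ℂ) ^ j • ((R0 ∘L A1) ^ j) (R0 (A0 (x n))) := by
    intro j
    induction j with
    | zero => intro n hn; simp
    | succ j ih =>
      intro n hn
      have hj : j + 1 ≤ n := le_trans (by omega) hn
      have h1n : 1 ≤ n - (j + 1) := by omega
      have hstep := key (n - (j + 1)) h1n
      have heq : n - (j + 1) + 1 = n - j := by omega
      rw [heq] at hstep
      rw [hstep, ih n hj, map_smul]
      have hcomm : (R0 ∘L A1) (((R0 ∘L A1) ^ j) (R0 (A0 (x n)))) =
          ((R0 ∘L A1) ^ (j + 1)) (R0 (A0 (x n))) := by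
        rw [pow_succ']; rfl
      rw [hcomm]
      have hsc : ((-1 : ℂ)) ^ (j + 1) = (-1 : ℂ) ^ j * -1 := pow_succ _ _
      rw [hsc, mul_neg_one, neg_smul]
  intro n hn k hk hkn
  have heq : n - k + 1 = n - (k - 1) := by omega
  rw [heq]
  rcases Nat.exists_eq_add_of_le hk with ⟨j, hj⟩
  have : k - 1 = j := by omega
  rw [this]
  exact main j n (by omega)
end

section
/- Assume the basic solution identities. If x ∈ X satisfies P x = x, where P = R_{-1}A_1, then the sequence x_{-n} := (-1)^{n-1}(R_{-1}A_0)^{n-1} x (n ≥ 1) satisfies x_{-1} = x and A_0 x_{-n} + A_1 x_{-n-1} = 0 for all n ≥ 1. -/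
theorem statement9
    {X Y : Type*} [NormedAddCommGroup X] [NormedSpace ℂ X] [CompleteSpace X]
    [NormedAddCommGroup Y] [NormedSpace ℂ Y] [CompleteSpace Y]
    (A0 A1 : X →L[ℂ] Y) (Rm1 R0 : Y →L[ℂ] X)
    (h1 : Rm1 ∘L A1 + R0 ∘L A0 = ContinuousLinearMap.id ℂ X)
    (h2 : A1 ∘L Rm1 + A0 ∘L R0 = ContinuousLinearMap.id ℂ Y)
    (h30 : (Rm1 ∘L A0) ∘L R0 = 0) (h31 : (Rm1 ∘L A1) ∘L R0 = 0)
    (h40 : (R0 ∘L A0) ∘L Rm1 = 0) (h41 : (R0 ∘L A1) ∘L Rm1 = 0)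
    (x : X) (hx : Rm1 (A1 x) = x)
    (xm : ℕ → X)
    (hxm : ∀ n : ℕ, 1 ≤ n → xm n = (-1 : ℂ) ^ (n - 1) • ((Rm1 ∘L A0) ^ (n - 1)) x) :
    xm 1 = x ∧ ∀ n : ℕ, 1 ≤ n → A0 (xm n) + A1 (xm (n + 1)) = 0 := by
  constructor
  · have := hxm 1 le_rfl
    simpa using this
  · intro n hn
    obtain ⟨m, rfl⟩ := Nat.exists_eq_add_of_le hn
    have hmn : 1 + m - 1 = m := by omega
    have e1 : xm (1 + m) = (-1 : ℂ) ^ m • ((Rm1 ∘L A0) ^ m) x := by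
      rw [hxm (1 + m) hn, hmn]
    have e2 : xm (1 + m + 1) = (-1 : ℂ) ^ (m + 1) • ((Rm1 ∘L A0) ^ (m + 1)) x := by
      have h' : 1 + m + 1 - 1 = m + 1 := by omega
      rw [hxm (1 + m + 1) (by omega), h']
    set y : X := ((Rm1 ∘L A0) ^ m) x with hy
    -- key: R0 (A0 y) = 0
    have hkey : R0 (A0 y) = 0 := by
      cases m with
      | zero =>
        have : y = Rm1 (A1 x) := by simp [hy, hx]
        rw [this]
        have := congrArg (fun T : Y →L[ℂ] X => T (A1 x)) h40
        simpa using this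
      | succ k =>
        have : ((Rm1 ∘L A0) ^ (k + 1)) x = Rm1 (A0 (((Rm1 ∘L A0) ^ k) x)) := by
          rw [pow_succ']
          rfl
        rw [hy, this]
        have := congrArg (fun T : Y →L[ℂ] X => T (A0 (((Rm1 ∘L A0) ^ k) x))) h40
        simpa using this
    have h2y := congrArg (fun T : Y →L[ℂ] Y => T (A0 y)) h2
    simp only [ContinuousLinearMap.add_apply, ContinuousLinearMap.comp_apply,
      ContinuousLinearMap.id_apply, hkey, map_zero, add_zero] at h2y
    -- h2y : A1 (Rm1 (A0 y)) = A0 y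
    have e3 : ((Rm1 ∘L A0) ^ (m + 1)) x = Rm1 (A0 y) := by
      rw [pow_succ', ContinuousLinearMap.mul_apply]; rfl
    rw [e1, e2, e3, map_smul, map_smul, h2y, pow_succ]
    module
end

section
/- Under the basic solution identities, A_0 maps the range of P^c = I − P onto the range of Q^c = I − Q, and R_0 maps the range of Q^c onto the range of P^c: A_0(P^c(X)) = Q^c(Y) and R_0(Q^c(Y)) = P^c(X). -/
theorem statement11
    {X Y : Type*} [NormedAddCommGroup X] [NormedSpace ℂ X] [CompleteSpace X]
    [NormedAddCommGroup Y] [NormedSpace ℂ Y] [CompleteSpace Y]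
    (A0 A1 : X →L[ℂ] Y) (Rm1 R0 : Y →L[ℂ] X)
    (h1 : Rm1 ∘L A1 + R0 ∘L A0 = ContinuousLinearMap.id ℂ X)
    (h2 : A1 ∘L Rm1 + A0 ∘L R0 = ContinuousLinearMap.id ℂ Y)
    (h30 : (Rm1 ∘L A0) ∘L R0 = 0) (h31 : (Rm1 ∘L A1) ∘L R0 = 0)
    (h40 : (R0 ∘L A0) ∘L Rm1 = 0) (h41 : (R0 ∘L A1) ∘L Rm1 = 0) :
    A0 '' Set.range (ContinuousLinearMap.id ℂ X - Rm1 ∘L A1) =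
      Set.range (ContinuousLinearMap.id ℂ Y - A1 ∘L Rm1) ∧
    R0 '' Set.range (ContinuousLinearMap.id ℂ Y - A1 ∘L Rm1) =
      Set.range (ContinuousLinearMap.id ℂ X - Rm1 ∘L A1) := by
  have e1 : ∀ x : X, x - Rm1 (A1 x) = R0 (A0 x) := by
    intro x
    have := ContinuousLinearMap.ext_iff.mp h1 x
    simp only [ContinuousLinearMap.add_apply, ContinuousLinearMap.comp_apply,
      ContinuousLinearMap.id_apply] at this
    rw [sub_eq_iff_eq_add, add_comm]; exact this.symm
  have e2 : ∀ y : Y, y - A1 (Rm1 y) = A0 (R0 y) := by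
    intro y
    have := ContinuousLinearMap.ext_iff.mp h2 y
    simp only [ContinuousLinearMap.add_apply, ContinuousLinearMap.comp_apply,
      ContinuousLinearMap.id_apply] at this
    rw [sub_eq_iff_eq_add, add_comm]; exact this.symm
  have z31 : ∀ y : Y, Rm1 (A1 (R0 y)) = 0 := by
    intro y
    have := ContinuousLinearMap.ext_iff.mp h31 y
    simpa using this
  have z41 : ∀ y : Y, R0 (A1 (Rm1 y)) = 0 := by
    intro y
    have := ContinuousLinearMap.ext_iff.mp h41 y
    simpa using this
  constructor
  · ext y
    constructor
    · rintro ⟨_, ⟨x, rfl⟩, rfl⟩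
      refine ⟨A0 x, ?_⟩
      simp only [ContinuousLinearMap.sub_apply, ContinuousLinearMap.comp_apply,
        ContinuousLinearMap.id_apply]
      rw [e2 (A0 x), e1 x]
    · rintro ⟨y', rfl⟩
      refine ⟨R0 y', ⟨R0 y', ?_⟩, ?_⟩
      · simp only [ContinuousLinearMap.sub_apply, ContinuousLinearMap.comp_apply,
          ContinuousLinearMap.id_apply]
        rw [z31 y', sub_zero]
      · simp only [ContinuousLinearMap.sub_apply, ContinuousLinearMap.comp_apply,
          ContinuousLinearMap.id_apply]
        rw [e2 y']
  · ext x
    constructor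
    · rintro ⟨_, ⟨y, rfl⟩, rfl⟩
      refine ⟨R0 y, ?_⟩
      simp only [ContinuousLinearMap.sub_apply, ContinuousLinearMap.comp_apply,
        ContinuousLinearMap.id_apply]
      rw [e1 (R0 y), e2 y]
    · rintro ⟨x', rfl⟩
      refine ⟨A0 x' - A1 (Rm1 (A0 x')), ⟨A0 x', ?_⟩, ?_⟩
      · simp only [ContinuousLinearMap.sub_apply, ContinuousLinearMap.comp_apply,
          ContinuousLinearMap.id_apply]
      · simp only [ContinuousLinearMap.sub_apply, ContinuousLinearMap.comp_apply,
          ContinuousLinearMap.id_apply]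
        rw [map_sub R0, z41 (A0 x'), sub_zero, ← e1 x']
end

section
/- Let A_0 = B (weighted forward shift with weights β_n ≠ 0, |β_n|^{1/n} → 0) and A_1 = I on ℓ². Define the relative ascent α(B:I) as the least m with ker(B) ∩ [B^m(ℓ²)]^a = {0} (∞ if none) and relative descent δ(B:I) as the least m with [B(ℓ²)]^a + ker(B^m) = ℓ². Then δ(B:I) = 0 while α(B:I) = ∞. -/
/-!
With `e k` the unit vectors, `B (e (k+1)) = β k • e k`, so the range of `B` contains every `e k` and
is dense; hence the descent condition holds already for `m = 0`. On the other hand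
`e 0` lies in `ker B` and, up to the nonzero scalar `β 0 ⋯ β (m-1)`, equals `B^m (e m)`,
so `ker B ∩ [B^m ℓ²]^a ∋ e 0` for every `m` and the ascent is infinite.
-/

local notation "ℓ^" p "(" 𝕜 ")" => lp (fun _ : ℕ => 𝕜) p

namespace WeightedShift

section Lp

variable {𝕜 : Type*} [NormedField 𝕜] {p : ENNReal} [Fact (1 ≤ p)] {β : ℕ → 𝕜}
  {B : ℓ^p(𝕜) →L[𝕜] ℓ^p(𝕜)}

theorem apply_single_succ (hB : ∀ x i, B x i = β i * x (i + 1)) (k : ℕ) (c : 𝕜) :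
    B (lp.single p (k + 1) c) = lp.single p k (β k * c) := by
  ext i
  rw [hB]
  rcases eq_or_ne i k with rfl | h
  · rw [lp.single_apply_self, lp.single_apply_self]
  · rw [lp.single_apply_ne _ _ _ (fun hi => h (Nat.succ_injective hi)),
      lp.single_apply_ne _ _ _ h, mul_zero]

theorem apply_single_zero (hB : ∀ x i, B x i = β i * x (i + 1)) (c : 𝕜) :
    B (lp.single p 0 c) = 0 := by
  ext i
  rw [hB, lp.single_apply_ne _ _ _ (Nat.succ_ne_zero i), mul_zero]
  rfl

theorem pow_apply_single (hB : ∀ x i, B x i = β i * x (i + 1)) (m : ℕ) (c : 𝕜) :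
    (B ^ m) (lp.single p m c) = lp.single p 0 ((∏ j ∈ Finset.range m, β j) * c) := by
  induction m generalizing c with
  | zero => simp
  | succ m ih =>
    rw [pow_succ, mul_apply_eq_comp, apply_single_succ hB, ih,
      Finset.prod_range_succ, mul_assoc]

theorem single_zero_mem_range_pow (hβ0 : ∀ n, β n ≠ 0)
    (hB : ∀ x i, B x i = β i * x (i + 1)) (m : ℕ) :
    (lp.single p 0 (1 : 𝕜) : ℓ^p(𝕜)) ∈ LinearMap.range ((B ^ m : ℓ^p(𝕜) →L[𝕜] ℓ^p(𝕜)) : ℓ^p(𝕜) →ₗ[𝕜] ℓ^p(𝕜)) := by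
  have hprod : ∏ j ∈ Finset.range m, β j ≠ 0 := Finset.prod_ne_zero_iff.mpr fun j _ => hβ0 j
  refine ⟨lp.single p m (∏ j ∈ Finset.range m, β j)⁻¹, ?_⟩
  rw [ContinuousLinearMap.coe_coe, pow_apply_single hB, mul_inv_cancel₀ hprod]

theorem ker_inf_closure_range_pow_ne_bot (hβ0 : ∀ n, β n ≠ 0)
    (hB : ∀ x i, B x i = β i * x (i + 1)) (m : ℕ) :
    LinearMap.ker (B : ℓ^p(𝕜) →ₗ[𝕜] ℓ^p(𝕜)) ⊓
      (LinearMap.range ((B ^ m : ℓ^p(𝕜) →L[𝕜] ℓ^p(𝕜)) : ℓ^p(𝕜) →ₗ[𝕜] ℓ^p(𝕜))).topologicalClosure ≠ ⊥ := by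
  have hmem : (lp.single p 0 (1 : 𝕜) : ℓ^p(𝕜)) ∈ LinearMap.ker (B : ℓ^p(𝕜) →ₗ[𝕜] ℓ^p(𝕜)) ⊓
      (LinearMap.range ((B ^ m : ℓ^p(𝕜) →L[𝕜] ℓ^p(𝕜)) : ℓ^p(𝕜) →ₗ[𝕜] ℓ^p(𝕜))).topologicalClosure :=
    ⟨apply_single_zero hB 1,
      Submodule.le_topologicalClosure _ (single_zero_mem_range_pow hβ0 hB m)⟩
  intro h
  rw [h, Submodule.mem_bot] at hmem
  simpa using congrArg (fun x : ℓ^p(𝕜) => x 0) hmem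

end Lp

theorem closure_range_eq_top {𝕜 : Type*} [RCLike 𝕜] {β : ℕ → 𝕜} (hβ0 : ∀ n, β n ≠ 0)
    {B : ℓ^2(𝕜) →L[𝕜] ℓ^2(𝕜)}
    (hB : ∀ x i, B x i = β i * x (i + 1)) :
    (LinearMap.range (B : ℓ^2(𝕜) →ₗ[𝕜] ℓ^2(𝕜))).topologicalClosure = ⊤ := by
  rw [Submodule.topologicalClosure_eq_top_iff, Submodule.eq_bot_iff]
  intro y hy
  ext i
  have horth := (Submodule.mem_orthogonal _ y).mp hy _
    (LinearMap.mem_range_self (B : ℓ^2(𝕜) →ₗ[𝕜] ℓ^2(𝕜)) (lp.single 2 (i + 1) 1))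
  rw [ContinuousLinearMap.coe_coe, apply_single_succ hB, mul_one, lp.inner_single_left,
    RCLike.inner_apply', mul_eq_zero, map_eq_zero] at horth
  exact horth.resolve_left (hβ0 i)

end WeightedShift

theorem statement19_general
    (β : ℕ → ℂ) (hβ0 : ∀ n, β n ≠ 0)
    (B : lp (fun _ : ℕ => ℂ) 2 →L[ℂ] lp (fun _ : ℕ => ℂ) 2)
    (hB : ∀ (x : lp (fun _ : ℕ => ℂ) 2) (i : ℕ), (B x) i = β i * x (i + 1)) :
    -- descent is 0: the defining condition already holds at m = 0
    ((LinearMap.range (B : lp (fun _ : ℕ => ℂ) 2 →ₗ[ℂ] lp (fun _ : ℕ => ℂ) 2)).topologicalClosure ⊔ LinearMap.ker ((B ^ (0 : ℕ) : lp (fun _ : ℕ => ℂ) 2 →L[ℂ] lp (fun _ : ℕ => ℂ) 2) : lp (fun _ : ℕ => ℂ) 2 →ₗ[ℂ] lp (fun _ : ℕ => ℂ) 2) = ⊤) ∧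
    -- ascent is ∞: the defining condition fails for every m
    (∀ m : ℕ, LinearMap.ker (B : lp (fun _ : ℕ => ℂ) 2 →ₗ[ℂ] lp (fun _ : ℕ => ℂ) 2) ⊓ (LinearMap.range ((B ^ m : lp (fun _ : ℕ => ℂ) 2 →L[ℂ] lp (fun _ : ℕ => ℂ) 2) : lp (fun _ : ℕ => ℂ) 2 →ₗ[ℂ] lp (fun _ : ℕ => ℂ) 2)).topologicalClosure ≠ ⊥) := by
  refine ⟨?_, WeightedShift.ker_inf_closure_range_pow_ne_bot hβ0 hB⟩
  rw [WeightedShift.closure_range_eq_top hβ0 hB, top_sup_eq]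

theorem statement19
    (β : ℕ → ℂ) (hβ0 : ∀ n, β n ≠ 0)
    (hβ : Filter.Tendsto (fun n : ℕ => ‖β n‖ ^ (1 / (n : ℝ)))
      Filter.atTop (nhds 0))
    (B : lp (fun _ : ℕ => ℂ) 2 →L[ℂ] lp (fun _ : ℕ => ℂ) 2)
    (hB : ∀ (x : lp (fun _ : ℕ => ℂ) 2) (i : ℕ), (B x) i = β i * x (i + 1)) :
    -- descent is 0: the defining condition already holds at m = 0
    ((LinearMap.range (B : lp (fun _ : ℕ => ℂ) 2 →ₗ[ℂ] lp (fun _ : ℕ => ℂ) 2)).topologicalClosure ⊔ LinearMap.ker ((B ^ (0 : ℕ) : lp (fun _ : ℕ => ℂ) 2 →L[ℂ] lp (fun _ : ℕ => ℂ) 2) : lp (fun _ : ℕ => ℂ) 2 →ₗ[ℂ] lp (fun _ : ℕ => ℂ) 2) = ⊤) ∧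
    -- ascent is ∞: the defining condition fails for every m
    (∀ m : ℕ, LinearMap.ker (B : lp (fun _ : ℕ => ℂ) 2 →ₗ[ℂ] lp (fun _ : ℕ => ℂ) 2) ⊓ (LinearMap.range ((B ^ m : lp (fun _ : ℕ => ℂ) 2 →L[ℂ] lp (fun _ : ℕ => ℂ) 2) : lp (fun _ : ℕ => ℂ) 2 →ₗ[ℂ] lp (fun _ : ℕ => ℂ) 2)).topologicalClosure ≠ ⊥) :=
  statement19_general β hβ0 B hB
end
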